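/- Let α ∈ (0,1] and let m ≥ 0 be an integer. Then the m-fold conformable fractional derivative of H_m^α is the constant function 2^m · m! · α^m; that is, T_α^{(m)}(H_m^α)(x) = 2^m m! α^m for all x > 0. -/

import Mathlib

/-!
Since `H'_{m+1} = 2 (m + 1) H_m` and, for `x > 0`, the conformable derivative obeys the chain rule
`T_α (g ∘ (·)^α) = α · g' ∘ (·)^α`, one application of `T_α` sends `H_{m+1}^α` to
`2 (m + 1) α · H_m^α`. Iterating `m` times down to `H_0^α = 1` gives `2^m m! α^m`.
-/

/-- The physicists' Hermite polynomials, as real functions: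
`H₀ = 1`, `H₁ x = 2 x`, `H_{m+1} x = 2 x * H_m x - 2 m * H_{m-1} x`. -/
noncomputable def hermiteP : ℕ → ℝ → ℝ
  | 0, _ => 1
  | 1, x => 2 * x
  | (m + 2), x => 2 * x * hermiteP (m + 1) x - 2 * ((m : ℝ) + 1) * hermiteP m x

open Set

theorem hermiteP_add_two (m : ℕ) (x : ℝ) :
    hermiteP (m + 2) x = 2 * x * hermiteP (m + 1) x - 2 * ((m : ℝ) + 1) * hermiteP m x := by
  rw [hermiteP]

theorem hasDerivAt_hermiteP :
    ∀ (m : ℕ) (x : ℝ), HasDerivAt (hermiteP (m + 1)) (2 * ((m : ℝ) + 1) * hermiteP m x) x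
  | 0, x => by simpa [hermiteP] using (hasDerivAt_id x).const_mul (2 : ℝ)
  | 1, x => by
    have hrec : hermiteP 2 = fun y => 2 * y * hermiteP 1 y - 2 :=
      funext fun y => by rw [hermiteP_add_two 0 y]; simp [hermiteP]
    rw [hrec]
    refine ((((hasDerivAt_id' x).const_mul 2).mul (hasDerivAt_hermiteP 0 x)).sub_const
      2).congr_deriv ?_
    simp only [hermiteP, Nat.cast_zero, Nat.cast_one]; ring
  | m + 2, x => by
    have h1 : HasDerivAt (hermiteP (m + 2)) (2 * ((m : ℝ) + 2) * hermiteP (m + 1) x) x := by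
      convert hasDerivAt_hermiteP (m + 1) x using 2; push_cast; ring
    have hrec : hermiteP (m + 3) =
        fun y => 2 * y * hermiteP (m + 2) y - 2 * ((m : ℝ) + 2) * hermiteP (m + 1) y :=
      funext fun y => by rw [hermiteP_add_two (m + 1) y]; push_cast; ring
    rw [hrec]
    refine ((((hasDerivAt_id' x).const_mul 2).mul h1).sub
      ((hasDerivAt_hermiteP m x).const_mul (2 * ((m : ℝ) + 2)))).congr_deriv ?_
    rw [hermiteP_add_two m x]
    push_cast; ring

noncomputable def conformableDeriv (α : ℝ) (f : ℝ → ℝ) : ℝ → ℝ :=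
  fun x => x ^ (1 - α) * deriv f x

section conformableDeriv

variable {α : ℝ}

theorem conformableDeriv_const_mul (c : ℝ) (f : ℝ → ℝ) :
    conformableDeriv α (fun y => c * f y) = fun x => c * conformableDeriv α f x := by
  funext x
  simp only [conformableDeriv, deriv_const_mul_field]
  ring

theorem iterate_conformableDeriv_const_mul (c : ℝ) (f : ℝ → ℝ) (n : ℕ) :
    (conformableDeriv α)^[n] (fun y => c * f y) = fun x => c * (conformableDeriv α)^[n] f x := by
  induction n generalizing f with
  | zero => rfl
  | succ n ih =>
    rw [Function.iterate_succ_apply, Function.iterate_succ_apply, conformableDeriv_const_mul, ih]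

theorem Set.EqOn.conformableDeriv_of_isOpen {s : Set ℝ} {f g : ℝ → ℝ} (hfg : EqOn f g s)
    (hs : IsOpen s) : EqOn (conformableDeriv α f) (conformableDeriv α g) s := fun x hx => by
  simp only [conformableDeriv, (Filter.eventuallyEq_of_mem (hs.mem_nhds hx) hfg).deriv_eq]

theorem Set.EqOn.iterate_conformableDeriv_of_isOpen {s : Set ℝ} {f g : ℝ → ℝ}
    (hfg : EqOn f g s) (hs : IsOpen s) (n : ℕ) :
    EqOn ((conformableDeriv α)^[n] f) ((conformableDeriv α)^[n] g) s := by
  induction n generalizing f g with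
  | zero => exact hfg
  | succ n ih =>
    rw [Function.iterate_succ_apply, Function.iterate_succ_apply]
    exact ih (hfg.conformableDeriv_of_isOpen hs)

theorem conformableDeriv_comp_rpow {x g' : ℝ} {g : ℝ → ℝ} (hx : 0 < x)
    (hg : HasDerivAt g g' (x ^ α)) :
    conformableDeriv α (fun y => g (y ^ α)) x = α * g' := by
  have hcomp : HasDerivAt (fun y => g (y ^ α)) (g' * (α * x ^ (α - 1))) x :=
    hg.comp x (Real.hasDerivAt_rpow_const (Or.inl hx.ne'))
  have hcancel : x ^ (1 - α) * x ^ (α - 1) = 1 := by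
    rw [← Real.rpow_add hx]; norm_num
  rw [conformableDeriv, hcomp.deriv]
  linear_combination (α * g') * hcancel

end conformableDeriv

theorem conformableDeriv_hermiteP_rpow (α : ℝ) (m : ℕ) :
    EqOn (conformableDeriv α fun y => hermiteP (m + 1) (y ^ α))
      (fun y => 2 * ((m : ℝ) + 1) * α * hermiteP m (y ^ α)) (Ioi 0) := fun x hx => by
  rw [conformableDeriv_comp_rpow hx (hasDerivAt_hermiteP m _)]
  ring

theorem iterate_conformableDeriv_hermiteP_rpow (α : ℝ) (m : ℕ) :
    EqOn ((conformableDeriv α)^[m] fun y => hermiteP m (y ^ α))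
      (fun _ => 2 ^ m * (m.factorial : ℝ) * α ^ m) (Ioi 0) := by
  induction m with
  | zero => intro x _; simp [hermiteP]
  | succ m ih =>
    intro x hx
    rw [Function.iterate_succ_apply,
      (conformableDeriv_hermiteP_rpow α m).iterate_conformableDeriv_of_isOpen isOpen_Ioi m hx,
      iterate_conformableDeriv_const_mul]
    simp only [ih hx, Nat.factorial_succ]
    push_cast
    ring

theorem stmt_9_general (α : ℝ) (m : ℕ) :
    ∀ x : ℝ, 0 < x →
      ((fun f : ℝ → ℝ => fun x => x ^ (1 - α) * deriv f x)^[m]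
          (fun x : ℝ => hermiteP m (x ^ α))) x
        = 2 ^ m * (Nat.factorial m : ℝ) * α ^ m :=
  fun _ hx => iterate_conformableDeriv_hermiteP_rpow α m hx

theorem stmt_9 (α : ℝ) (hα : α ∈ Set.Ioc (0:ℝ) 1) (m : ℕ) :
    ∀ x : ℝ, 0 < x →
      ((fun f : ℝ → ℝ => fun x => x ^ (1 - α) * deriv f x)^[m]
          (fun x : ℝ => hermiteP m (x ^ α))) x
        = 2 ^ m * (Nat.factorial m : ℝ) * α ^ m :=
  stmt_9_general α m
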